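/- Let f : H → ℝ be convex and L_f-smooth, let (C_i) be nonempty compact convex with diameters R_i and nonempty intersection, let (λ_t) be an increasing sequence, let 𝐱_t* minimize F_{λ_t} over ∏C_i, and let H_t = F_{λ_t}(𝐱_t) − F_{λ_t}(𝐱_t*). Suppose 𝐱_{t+1} = 𝐱_t + γ_t(𝐯_t − 𝐱_t) where γ_t ∈ (0,1] and 𝐯_t minimizes 𝐯 ↦ ⟨∇F_{λ_t}(𝐱_t), 𝐯⟩ over ∏C_i. Then H_{t+1} ≤ (1−γ_t)H_t + ((λ_{t+1}−λ_t)/2)·Σ_i ω_i R_i² + γ_t²·((λ_t+L_f)/2)·Σ_i ω_i R_i². -/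

import Mathlib

open Filter Topology Metric

noncomputable def avgW {H : Type*} [NormedAddCommGroup H] [InnerProductSpace ℝ H]
    {m : ℕ} (ω : Fin m → ℝ) (x : Fin m → H) : H := ∑ i, ω i • x i

noncomputable def wInner {H : Type*} [NormedAddCommGroup H] [InnerProductSpace ℝ H]
    {m : ℕ} (ω : Fin m → ℝ) (x y : Fin m → H) : ℝ := ∑ i, ω i * (inner ℝ (x i) (y i) : ℝ)

noncomputable def wNormSq {H : Type*} [NormedAddCommGroup H] [InnerProductSpace ℝ H]
    {m : ℕ} (ω : Fin m → ℝ) (x : Fin m → H) : ℝ := ∑ i, ω i * ‖x i‖ ^ 2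

/-- Squared distance (in the weighted product norm) to the diagonal subspace
`D = {(z,...,z) : z ∈ H}`. -/
noncomputable def distDsq {H : Type*} [NormedAddCommGroup H] [InnerProductSpace ℝ H]
    {m : ℕ} (ω : Fin m → ℝ) (x : Fin m → H) : ℝ :=
  (⨅ z : H, Real.sqrt (wNormSq ω (fun i => x i - z))) ^ 2

/-- The Cartesian product `∏ᵢ Cᵢ` viewed inside the product space `H^m`. -/
def prodSet {H : Type*} {m : ℕ} (C : Fin m → Set H) : Set (Fin m → H) := {x | ∀ i, x i ∈ C i}

/-- The diagonal subspace of `H^m`. -/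
def diagSet (H : Type*) (m : ℕ) : Set (Fin m → H) := {x | ∀ i j, x i = x j}

section Helpers
variable {H : Type*} [NormedAddCommGroup H] [InnerProductSpace ℝ H] {m : ℕ}
variable (ω : Fin m → ℝ)

lemma avgW_add (x u : Fin m → H) :
    avgW ω (fun i => x i + u i) = avgW ω x + avgW ω u := by
  simp [avgW, smul_add, Finset.sum_add_distrib]

lemma wNormSq_nonneg (hω : ∀ i, 0 ≤ ω i) (u : Fin m → H) : 0 ≤ wNormSq ω u :=
  Finset.sum_nonneg fun i _ => mul_nonneg (hω i) (sq_nonneg _)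

lemma wNormSq_smul (c : ℝ) (u : Fin m → H) :
    wNormSq ω (fun i => c • u i) = c ^ 2 * wNormSq ω u := by
  simp only [wNormSq, norm_smul, mul_pow, Finset.mul_sum, Real.norm_eq_abs, sq_abs]
  exact Finset.sum_congr rfl fun i _ => by ring

lemma wInner_sub_right (g a b : Fin m → H) :
    wInner ω g (fun i => a i - b i) = wInner ω g a - wInner ω g b := by
  simp [wInner, inner_sub_right, mul_sub, Finset.sum_sub_distrib]

lemma wInner_smul_right (c : ℝ) (g u : Fin m → H) :
    wInner ω g (fun i => c • u i) = c * wInner ω g u := by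
  simp only [wInner, real_inner_smul_right, Finset.mul_sum]
  exact Finset.sum_congr rfl fun i _ => by ring

lemma sum_inner_sub_avg (hωsum : ∑ i, ω i = 1) (x : Fin m → H) (b : H) :
    ∑ i, ω i * (inner ℝ (x i - avgW ω x) b : ℝ) = 0 := by
  have h1 : ∑ i, ω i * (inner ℝ (x i - avgW ω x) b : ℝ)
      = (inner ℝ (∑ i, ω i • (x i - avgW ω x)) b : ℝ) := by
    rw [sum_inner]
    exact Finset.sum_congr rfl fun i _ => (real_inner_smul_left _ _ _).symm
  have h2 : ∑ i, ω i • (x i - avgW ω x) = 0 := by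
    simp only [smul_sub, Finset.sum_sub_distrib, ← Finset.sum_smul, hωsum, one_smul]
    simp [avgW]
  rw [h1, h2, inner_zero_left]

lemma wNormSq_sub_const (hωsum : ∑ i, ω i = 1) (x : Fin m → H) (z : H) :
    wNormSq ω (fun i => x i - z)
      = wNormSq ω (fun i => x i - avgW ω x) + ‖avgW ω x - z‖ ^ 2 := by
  have key : ∀ i, ‖x i - z‖ ^ 2
      = ‖x i - avgW ω x‖ ^ 2 + 2 * (inner ℝ (x i - avgW ω x) (avgW ω x - z) : ℝ)
        + ‖avgW ω x - z‖ ^ 2 := by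
    intro i
    have : x i - z = (x i - avgW ω x) + (avgW ω x - z) := by abel
    rw [this, norm_add_sq_real]
  simp only [wNormSq, key, mul_add, Finset.sum_add_distrib]
  rw [← Finset.sum_mul, hωsum]
  have : ∑ i, ω i * (2 * (inner ℝ (x i - avgW ω x) (avgW ω x - z) : ℝ))
      = 2 * ∑ i, ω i * (inner ℝ (x i - avgW ω x) (avgW ω x - z) : ℝ) := by
    rw [Finset.mul_sum]; exact Finset.sum_congr rfl fun i _ => by ring
  rw [this, sum_inner_sub_avg ω hωsum]
  ring

lemma distDsq_eq (hω : ∀ i, 0 ≤ ω i) (hωsum : ∑ i, ω i = 1) (x : Fin m → H) :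
    distDsq ω x = wNormSq ω (fun i => x i - avgW ω x) := by
  have hS : 0 ≤ wNormSq ω (fun i => x i - avgW ω x) := wNormSq_nonneg ω hω _
  have : Nonempty H := ⟨0⟩
  have hinf : (⨅ z : H, Real.sqrt (wNormSq ω (fun i => x i - z)))
      = Real.sqrt (wNormSq ω (fun i => x i - avgW ω x)) := by
    apply le_antisymm
    · exact ciInf_le ⟨0, by rintro _ ⟨z, rfl⟩; exact Real.sqrt_nonneg _⟩ (avgW ω x)
    · refine le_ciInf fun z => Real.sqrt_le_sqrt ?_
      rw [wNormSq_sub_const ω hωsum x z]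
      nlinarith [sq_nonneg ‖avgW ω x - z‖]
  rw [distDsq, hinf, Real.sq_sqrt hS]

lemma distDsq_nonneg (x : Fin m → H) : 0 ≤ distDsq ω x := sq_nonneg _

lemma avgW_normSq_le (hω : ∀ i, 0 ≤ ω i) (hωsum : ∑ i, ω i = 1) (u : Fin m → H) :
    ‖avgW ω u‖ ^ 2 ≤ wNormSq ω u := by
  have h1 : ‖avgW ω u‖ ≤ ∑ i, ω i * ‖u i‖ := by
    refine (norm_sum_le _ _).trans (le_of_eq ?_)
    exact Finset.sum_congr rfl fun i _ => by
      rw [norm_smul, Real.norm_eq_abs, abs_of_nonneg (hω i)]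
  have h2 : (∑ i, ω i * ‖u i‖) ^ 2 ≤ wNormSq ω u := by
    have := Finset.sum_mul_sq_le_sq_mul_sq Finset.univ
      (fun i => Real.sqrt (ω i)) (fun i => Real.sqrt (ω i) * ‖u i‖)
    have e1 : ∀ i : Fin m, Real.sqrt (ω i) * (Real.sqrt (ω i) * ‖u i‖) = ω i * ‖u i‖ := by
      intro i; rw [← mul_assoc, Real.mul_self_sqrt (hω i)]
    have e2 : ∀ i : Fin m, Real.sqrt (ω i) ^ 2 = ω i := fun i => Real.sq_sqrt (hω i)
    have e3 : ∀ i : Fin m, (Real.sqrt (ω i) * ‖u i‖) ^ 2 = ω i * ‖u i‖ ^ 2 := by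
      intro i; rw [mul_pow, Real.sq_sqrt (hω i)]
    simp only [e1, e2, e3, hωsum, one_mul] at this
    exact this.trans_eq rfl
  calc ‖avgW ω u‖ ^ 2 ≤ (∑ i, ω i * ‖u i‖) ^ 2 :=
        pow_le_pow_left₀ (norm_nonneg _) h1 2
    _ ≤ wNormSq ω u := h2

/-- Quadratic expansion of the diagonal-distance term. -/
lemma S_expand (hωsum : ∑ i, ω i = 1) (x u : Fin m → H) :
    wNormSq ω (fun i => (x i + u i) - avgW ω (fun j => x j + u j))
      = wNormSq ω (fun i => x i - avgW ω x)
        + 2 * ∑ i, ω i * (inner ℝ (x i - avgW ω x) (u i) : ℝ)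
        + wNormSq ω (fun i => u i - avgW ω u) := by
  have havg := avgW_add ω x u
  have key : ∀ i : Fin m, ‖(x i + u i) - avgW ω (fun j => x j + u j)‖ ^ 2
      = ‖x i - avgW ω x‖ ^ 2
        + 2 * (inner ℝ (x i - avgW ω x) (u i - avgW ω u) : ℝ)
        + ‖u i - avgW ω u‖ ^ 2 := by
    intro i
    have : (x i + u i) - avgW ω (fun j => x j + u j)
        = (x i - avgW ω x) + (u i - avgW ω u) := by rw [havg]; abel
    rw [this, norm_add_sq_real]
  simp only [wNormSq, key, mul_add, Finset.sum_add_distrib]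
  have hc : ∑ i, ω i * (2 * (inner ℝ (x i - avgW ω x) (u i - avgW ω u) : ℝ))
      = 2 * ∑ i, ω i * (inner ℝ (x i - avgW ω x) (u i) : ℝ) := by
    have : ∀ i : Fin m, ω i * (2 * (inner ℝ (x i - avgW ω x) (u i - avgW ω u) : ℝ))
        = 2 * (ω i * (inner ℝ (x i - avgW ω x) (u i) : ℝ))
          - 2 * (ω i * (inner ℝ (x i - avgW ω x) (avgW ω u) : ℝ)) := by
      intro i; rw [inner_sub_right]; ring
    rw [Finset.sum_congr rfl fun i _ => this i, Finset.sum_sub_distrib,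
      ← Finset.mul_sum, ← Finset.mul_sum, sum_inner_sub_avg ω hωsum]
    ring
  rw [hc]

/-- The weighted inner product of the penalized gradient with a direction. -/
lemma wInner_grad (hωsum : ∑ i, ω i = 1) (g : H) (lam : ℝ) (x u : Fin m → H) :
    wInner ω (fun i => g + lam • (x i - avgW ω x)) u
      = (inner ℝ g (avgW ω u) : ℝ)
        + lam * ∑ i, ω i * (inner ℝ (x i - avgW ω x) (u i) : ℝ) := by
  have h1 : ∀ i : Fin m, ω i * (inner ℝ (g + lam • (x i - avgW ω x)) (u i) : ℝ)
      = ω i * (inner ℝ g (u i) : ℝ) + lam * (ω i * (inner ℝ (x i - avgW ω x) (u i) : ℝ)) := by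
    intro i; rw [inner_add_left, real_inner_smul_left]; ring
  rw [wInner, Finset.sum_congr rfl fun i _ => h1 i, Finset.sum_add_distrib, ← Finset.mul_sum]
  congr 1
  rw [avgW, inner_sum]
  exact Finset.sum_congr rfl fun i _ => by rw [real_inner_smul_right]

/-- Descent lemma for `F_λ`. -/
lemma smoothF (hω : ∀ i, 0 ≤ ω i) (hωsum : ∑ i, ω i = 1)
    (f : H → ℝ) (f' : H → H) (Lf : ℝ) (hLf : 0 ≤ Lf)
    (hsmooth : ∀ x y : H,
      f y ≤ f x + (inner ℝ (f' x) (y - x) : ℝ) + Lf / 2 * ‖y - x‖ ^ 2)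
    (lam : ℝ) (hlam : 0 ≤ lam) (x u : Fin m → H) :
    f (avgW ω (fun i => x i + u i)) + lam / 2 * distDsq ω (fun i => x i + u i)
      ≤ f (avgW ω x) + lam / 2 * distDsq ω x
        + wInner ω (fun i => f' (avgW ω x) + lam • (x i - avgW ω x)) u
        + (Lf + lam) / 2 * wNormSq ω u := by
  set a := avgW ω x
  set au := avgW ω u
  have havg : avgW ω (fun i => x i + u i) = a + au := avgW_add ω x u
  have hf : f (a + au) ≤ f a + (inner ℝ (f' a) au : ℝ) + Lf / 2 * ‖au‖ ^ 2 := by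
    have := hsmooth a (a + au)
    simpa using this
  have hjen : ‖au‖ ^ 2 ≤ wNormSq ω u := avgW_normSq_le ω hω hωsum u
  have hSle : wNormSq ω (fun i => u i - au) ≤ wNormSq ω u := by
    have h0 := wNormSq_sub_const ω hωsum u 0
    simp only [sub_zero] at h0
    nlinarith [sq_nonneg ‖au - 0‖]
  have hexp := S_expand ω hωsum x u
  have hd1 := distDsq_eq ω hω hωsum (fun i => x i + u i)
  have hd2 := distDsq_eq ω hω hωsum x
  have hg := wInner_grad ω hωsum (f' a) lam x u
  rw [havg, hd1, hd2, hg, hexp]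
  have h1 : Lf / 2 * ‖au‖ ^ 2 ≤ Lf / 2 * wNormSq ω u :=
    mul_le_mul_of_nonneg_left hjen (by linarith)
  have h2 : lam / 2 * wNormSq ω (fun i => u i - au) ≤ lam / 2 * wNormSq ω u :=
    mul_le_mul_of_nonneg_left hSle (by linarith)
  simp only [a, au] at *
  nlinarith [hf]

/-- Convexity lower bound for `F_λ`. -/
lemma convF (hω : ∀ i, 0 ≤ ω i) (hωsum : ∑ i, ω i = 1)
    (f : H → ℝ) (f' : H → H)
    (hconv : ∀ x y : H, f x + (inner ℝ (f' x) (y - x) : ℝ) ≤ f y)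
    (lam : ℝ) (hlam : 0 ≤ lam) (x u : Fin m → H) :
    f (avgW ω x) + lam / 2 * distDsq ω x
        + wInner ω (fun i => f' (avgW ω x) + lam • (x i - avgW ω x)) u
      ≤ f (avgW ω (fun i => x i + u i)) + lam / 2 * distDsq ω (fun i => x i + u i) := by
  set a := avgW ω x
  set au := avgW ω u
  have havg : avgW ω (fun i => x i + u i) = a + au := avgW_add ω x u
  have hf : f a + (inner ℝ (f' a) au : ℝ) ≤ f (a + au) := by
    have := hconv a (a + au)
    simpa using this
  have hSu : 0 ≤ wNormSq ω (fun i => u i - au) := wNormSq_nonneg ω hω _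
  have hexp := S_expand ω hωsum x u
  have hd1 := distDsq_eq ω hω hωsum (fun i => x i + u i)
  have hd2 := distDsq_eq ω hω hωsum x
  have hg := wInner_grad ω hωsum (f' a) lam x u
  rw [havg, hd1, hd2, hg, hexp]
  simp only [a, au] at *
  nlinarith [hf]

end Helpers

/-- Lemma 3.3 (recurrence for the primal gap `H_t = F_{λ_t}(𝐱_t) − F_{λ_t}(𝐱*_t)` in the
convex setting): one conditional-gradient step `𝐱_{t+1} = 𝐱_t + γ_t(𝐯_t − 𝐱_t)`, where
`𝐯_t` minimizes the linearization `𝐯 ↦ ⟨∇F_{λ_t}(𝐱_t), 𝐯⟩` over `∏ᵢ Cᵢ`, satisfies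
`H_{t+1} ≤ (1−γ_t)H_t + ((λ_{t+1}−λ_t)/2)·Σᵢ ωᵢRᵢ² + γ_t²((λ_t+L_f)/2)·Σᵢ ωᵢRᵢ²`. -/
theorem cg_recurrence {H : Type*} [NormedAddCommGroup H] [InnerProductSpace ℝ H]
    [CompleteSpace H] {m : ℕ}
    (ω : Fin m → ℝ) (hω : ∀ i, 0 < ω i) (hωsum : ∑ i, ω i = 1)
    (f : H → ℝ) (f' : H → H) (Lf : ℝ) (hLf : 0 < Lf)
    (hgrad : ∀ x, HasGradientAt f (f' x) x)
    (hsmooth : ∀ x y : H,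
      f y ≤ f x + (inner ℝ (f' x) (y - x) : ℝ) + Lf / 2 * ‖y - x‖ ^ 2)
    (hconv : ∀ x y : H, f x + (inner ℝ (f' x) (y - x) : ℝ) ≤ f y)
    (C : Fin m → Set H) (hCne : ∀ i, (C i).Nonempty)
    (hCc : ∀ i, IsCompact (C i)) (hCv : ∀ i, Convex ℝ (C i))
    (hint : (⋂ i, C i).Nonempty)
    (R : Fin m → ℝ) (hR : ∀ i, R i = Metric.diam (C i))
    (lam : ℕ → ℝ) (hmono : Monotone lam) (hlam0 : ∀ t, 0 ≤ lam t)
    (γ : ℕ → ℝ) (hγ : ∀ t, γ t ∈ Set.Ioc (0 : ℝ) 1)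
    (x v xstar : ℕ → Fin m → H)
    (hx0 : x 0 ∈ prodSet C)
    (hstar : ∀ t, xstar t ∈ prodSet C ∧ ∀ y ∈ prodSet C,
      f (avgW ω (xstar t)) + lam t / 2 * distDsq ω (xstar t)
        ≤ f (avgW ω y) + lam t / 2 * distDsq ω y)
    (hv : ∀ t, v t ∈ prodSet C ∧ ∀ c ∈ prodSet C,
      wInner ω (fun i => f' (avgW ω (x t)) + lam t • (x t i - avgW ω (x t))) (v t)
        ≤ wInner ω (fun i => f' (avgW ω (x t)) + lam t • (x t i - avgW ω (x t))) c)
    (hupd : ∀ t, x (t + 1) = fun i => x t i + γ t • (v t i - x t i)) :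
    ∀ t : ℕ,
      (f (avgW ω (x (t + 1))) + lam (t + 1) / 2 * distDsq ω (x (t + 1)))
          - (f (avgW ω (xstar (t + 1))) + lam (t + 1) / 2 * distDsq ω (xstar (t + 1)))
        ≤ (1 - γ t) *
            ((f (avgW ω (x t)) + lam t / 2 * distDsq ω (x t))
              - (f (avgW ω (xstar t)) + lam t / 2 * distDsq ω (xstar t)))
          + (lam (t + 1) - lam t) / 2 * ∑ i, ω i * R i ^ 2
          + γ t ^ 2 * ((lam t + Lf) / 2) * ∑ i, ω i * R i ^ 2 := by
  intro t
  obtain ⟨z, hz⟩ := hint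
  have hω' : ∀ i, 0 ≤ ω i := fun i => (hω i).le
  -- iterates stay in the feasible region
  have hxC : ∀ s, x s ∈ prodSet C := by
    intro s
    induction s with
    | zero => exact hx0
    | succ n ih =>
      intro i
      rw [hupd n]
      have hmem : (1 - γ n) • x n i + γ n • v n i ∈ C i :=
        hCv i (ih i) ((hv n).1 i) (by linarith [(hγ n).2]) (hγ n).1.le (by ring)
      have heq : x n i + γ n • (v n i - x n i) = (1 - γ n) • x n i + γ n • v n i := by
        rw [smul_sub, sub_smul, one_smul]; abel
      simpa [heq] using hmem
  have hzC : (fun _ : Fin m => z) ∈ prodSet C := fun i => Set.mem_iInter.mp hz i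
  -- diameter bounds
  have hpair : ∀ p q : Fin m → H, p ∈ prodSet C → q ∈ prodSet C →
      wNormSq ω (fun i => p i - q i) ≤ ∑ i, ω i * R i ^ 2 := by
    intro p q hp hq
    refine Finset.sum_le_sum fun i _ => mul_le_mul_of_nonneg_left ?_ (hω' i)
    have hdle : dist (p i) (q i) ≤ Metric.diam (C i) :=
      Metric.dist_le_diam_of_mem (hCc i).isBounded (hp i) (hq i)
    rw [hR i]
    calc ‖p i - q i‖ ^ 2 = dist (p i) (q i) ^ 2 := by rw [dist_eq_norm]
      _ ≤ Metric.diam (C i) ^ 2 := pow_le_pow_left₀ dist_nonneg hdle 2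
  have hdD : ∀ p, p ∈ prodSet C → distDsq ω p ≤ ∑ i, ω i * R i ^ 2 := by
    intro p hp
    rw [distDsq_eq ω hω' hωsum]
    have h1 := wNormSq_sub_const ω hωsum p z
    have h2 := hpair p (fun _ => z) hp hzC
    nlinarith [sq_nonneg ‖avgW ω p - z‖]
  set K := ∑ i, ω i * R i ^ 2 with hK
  -- descent step
  have hsm : f (avgW ω (x (t + 1))) + lam t / 2 * distDsq ω (x (t + 1))
      ≤ f (avgW ω (x t)) + lam t / 2 * distDsq ω (x t)
        + wInner ω (fun i => f' (avgW ω (x t)) + lam t • (x t i - avgW ω (x t)))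
            (fun i => γ t • (v t i - x t i))
        + (Lf + lam t) / 2 * wNormSq ω (fun i => γ t • (v t i - x t i)) := by
    rw [hupd t]
    exact smoothF ω hω' hωsum f f' Lf hLf.le hsmooth (lam t) (hlam0 t) (x t)
      (fun i => γ t • (v t i - x t i))
  have e1 : wInner ω (fun i => f' (avgW ω (x t)) + lam t • (x t i - avgW ω (x t)))
        (fun i => γ t • (v t i - x t i))
      = γ t * (wInner ω (fun i => f' (avgW ω (x t)) + lam t • (x t i - avgW ω (x t))) (v t)
          - wInner ω (fun i => f' (avgW ω (x t)) + lam t • (x t i - avgW ω (x t))) (x t)) := by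
    rw [show (fun i => γ t • (v t i - x t i))
        = fun i => γ t • ((fun j => v t j - x t j) i) from rfl,
      wInner_smul_right, wInner_sub_right]
  have e2 : wNormSq ω (fun i => γ t • (v t i - x t i))
      = γ t ^ 2 * wNormSq ω (fun i => v t i - x t i) := by
    rw [show (fun i => γ t • (v t i - x t i))
        = fun i => γ t • ((fun j => v t j - x t j) i) from rfl, wNormSq_smul]
  -- linear minimization + convexity
  have hlin : wInner ω (fun i => f' (avgW ω (x t)) + lam t • (x t i - avgW ω (x t))) (v t)
      ≤ wInner ω (fun i => f' (avgW ω (x t)) + lam t • (x t i - avgW ω (x t))) (xstar t) :=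
    (hv t).2 (xstar t) (hstar t).1
  have hcF : f (avgW ω (x t)) + lam t / 2 * distDsq ω (x t)
        + (wInner ω (fun i => f' (avgW ω (x t)) + lam t • (x t i - avgW ω (x t))) (xstar t)
          - wInner ω (fun i => f' (avgW ω (x t)) + lam t • (x t i - avgW ω (x t))) (x t))
      ≤ f (avgW ω (xstar t)) + lam t / 2 * distDsq ω (xstar t) := by
    have h := convF ω hω' hωsum f f' hconv (lam t) (hlam0 t) (x t)
      (fun i => xstar t i - x t i)
    have hxx : (fun i => x t i + (xstar t i - x t i)) = xstar t := by
      funext i; abel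
    rw [wInner_sub_right] at h
    rw [show avgW ω (fun i => x t i + (xstar t i - x t i)) = avgW ω (xstar t) by rw [hxx],
      show distDsq ω (fun i => x t i + (xstar t i - x t i)) = distDsq ω (xstar t) by rw [hxx]]
        at h
    exact h
  -- quantitative bounds
  have hq : wNormSq ω (fun i => v t i - x t i) ≤ K :=
    hpair (v t) (x t) (hv t).1 (hxC t)
  have hdnext : distDsq ω (x (t + 1)) ≤ K := hdD _ (hxC (t + 1))
  have hΔ : lam t ≤ lam (t + 1) := hmono (Nat.le_succ t)
  have hγt := hγ t
  obtain ⟨hγ0, hγ1⟩ := hγt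
  -- optimal value monotonicity
  have hs1 : f (avgW ω (xstar t)) + lam t / 2 * distDsq ω (xstar t)
      ≤ f (avgW ω (xstar (t + 1))) + lam t / 2 * distDsq ω (xstar (t + 1)) :=
    (hstar t).2 (xstar (t + 1)) (hstar (t + 1)).1
  have hs2 : lam t / 2 * distDsq ω (xstar (t + 1))
      ≤ lam (t + 1) / 2 * distDsq ω (xstar (t + 1)) :=
    mul_le_mul_of_nonneg_right (by linarith) (distDsq_nonneg ω _)
  -- assemble
  have hγmul : γ t * (wInner ω (fun i => f' (avgW ω (x t)) + lam t • (x t i - avgW ω (x t))) (v t)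
        - wInner ω (fun i => f' (avgW ω (x t)) + lam t • (x t i - avgW ω (x t))) (x t))
      ≤ γ t * ((f (avgW ω (xstar t)) + lam t / 2 * distDsq ω (xstar t))
        - (f (avgW ω (x t)) + lam t / 2 * distDsq ω (x t))) := by
    apply mul_le_mul_of_nonneg_left _ hγ0.le
    linarith
  have hcoef : (Lf + lam t) / 2 * (γ t ^ 2 * wNormSq ω (fun i => v t i - x t i))
      ≤ (Lf + lam t) / 2 * (γ t ^ 2 * K) := by
    apply mul_le_mul_of_nonneg_left _ (by linarith [hlam0 t, hLf.le])
    exact mul_le_mul_of_nonneg_left hq (sq_nonneg _)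
  have hdsplit : lam (t + 1) / 2 * distDsq ω (x (t + 1))
      = lam t / 2 * distDsq ω (x (t + 1))
        + (lam (t + 1) - lam t) / 2 * distDsq ω (x (t + 1)) := by ring
  have hdb : (lam (t + 1) - lam t) / 2 * distDsq ω (x (t + 1))
      ≤ (lam (t + 1) - lam t) / 2 * K :=
    mul_le_mul_of_nonneg_left hdnext (by linarith)
  rw [e1, e2] at hsm
  nlinarith [hsm, hγmul, hcoef, hdsplit, hdb, hs1, hs2]
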